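/- arXiv:2512.24610 — 2 statements merged into one kernel-verified Lean document; each statement's English description precedes it below -/
import Mathlib

section
/- Let θ₁, θ₂, θ₃ ∈ (0, π) with θ₁ + θ₂ + θ₃ = 2π, and let σ₁₂, σ₁₃, σ₂₃ > 0 satisfy Young's law sin θ₁/σ₂₃ = sin θ₂/σ₁₃ = sin θ₃/σ₁₂. If α₂ − α₁ ∈ (π − θ₁, θ₃) and sin θ₁ · cos(α₂ − α₁ − (π − θ₁)) + sin θ₂ · cos(π − θ₁) ≤ sin θ₃, then a contradiction follows. -/
open Real

/-! Since `θ₁ + θ₂ + θ₃ = 2π`, the addition formula gives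
`sin θ₃ = sin θ₁ cos (π - θ₂) + sin θ₂ cos (π - θ₁)`. An opening angle below `θ₃` makes
`α₂ - α₁ - (π - θ₁)` lie in `[0, π - θ₂)`, where cosine exceeds `cos (π - θ₂)`, so the
left side of the stability inequality is strictly larger than `sin θ₃`. -/

theorem sin_eq_of_add_add_eq_two_pi {θ₁ θ₂ θ₃ : ℝ} (hsum : θ₁ + θ₂ + θ₃ = 2 * π) :
    sin θ₃ = sin θ₁ * cos (π - θ₂) + sin θ₂ * cos (π - θ₁) := by
  rw [show θ₃ = 2 * π - (θ₁ + θ₂) by linarith, sin_two_pi_sub, sin_add, cos_pi_sub, cos_pi_sub]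
  ring

theorem stmt_3_general (θ₁ θ₂ θ₃ α₁ α₂ : ℝ)
    (hθ₁ : θ₁ ∈ Set.Ioo 0 Real.pi) (hθ₂ : θ₂ ∈ Set.Ioo 0 Real.pi)
    (hsum : θ₁ + θ₂ + θ₃ = 2 * Real.pi)
    (hα : α₂ - α₁ ∈ Set.Ioo (Real.pi - θ₁) θ₃)
    (hstab : Real.sin θ₁ * Real.cos (α₂ - α₁ - (Real.pi - θ₁))
        + Real.sin θ₂ * Real.cos (Real.pi - θ₁) ≤ Real.sin θ₃) : False := by
  have hcos : cos (π - θ₂) < cos (α₂ - α₁ - (π - θ₁)) :=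
    cos_lt_cos_of_nonneg_of_le_pi (by linarith [hα.1]) (by linarith [hθ₂.1])
      (by linarith [hα.2])
  have hsin₁ : 0 < sin θ₁ := sin_pos_of_pos_of_lt_pi hθ₁.1 hθ₁.2
  rw [sin_eq_of_add_add_eq_two_pi hsum] at hstab
  linarith [mul_lt_mul_of_pos_left hcos hsin₁]

/-- Young's law junction angles: if `θ₁, θ₂, θ₃ ∈ (0,π)` with `θ₁+θ₂+θ₃ = 2π`,
`σ₁₂, σ₁₃, σ₂₃ > 0` satisfy `sin θ₁/σ₂₃ = sin θ₂/σ₁₃ = sin θ₃/σ₁₂`,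
`α₂ − α₁ ∈ (π − θ₁, θ₃)` and
`sin θ₁ · cos(α₂ − α₁ − (π − θ₁)) + sin θ₂ · cos(π − θ₁) ≤ sin θ₃`,
then a contradiction follows. -/
theorem stmt_3 (θ₁ θ₂ θ₃ σ₁₂ σ₁₃ σ₂₃ α₁ α₂ : ℝ)
    (hθ₁ : θ₁ ∈ Set.Ioo 0 Real.pi) (hθ₂ : θ₂ ∈ Set.Ioo 0 Real.pi)
    (hθ₃ : θ₃ ∈ Set.Ioo 0 Real.pi)
    (hsum : θ₁ + θ₂ + θ₃ = 2 * Real.pi)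
    (h12 : 0 < σ₁₂) (h13 : 0 < σ₁₃) (h23 : 0 < σ₂₃)
    (hyoung1 : Real.sin θ₁ / σ₂₃ = Real.sin θ₂ / σ₁₃)
    (hyoung2 : Real.sin θ₂ / σ₁₃ = Real.sin θ₃ / σ₁₂)
    (hα : α₂ - α₁ ∈ Set.Ioo (Real.pi - θ₁) θ₃)
    (hstab : Real.sin θ₁ * Real.cos (α₂ - α₁ - (Real.pi - θ₁))
        + Real.sin θ₂ * Real.cos (Real.pi - θ₁) ≤ Real.sin θ₃) : False :=
  stmt_3_general θ₁ θ₂ θ₃ α₁ α₂ hθ₁ hθ₂ hsum hα hstab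
end

section
/- Let u : ℝ²₊ → ℝ² be a C² solution of Δu = ∇W(u). Then for every r > 0, ∫_{B_r⁺} ∂_j(z_i T_ij) dz = −2 ∫_{B_r⁺} W(u) dz, where T_ij = ∂_i u · ∂_j u − δ_ij (½|∇u|² + W(u)) and summation over repeated indices i, j ∈ {1,2} is understood. -/
open Real InnerProductSpace MeasureTheory

noncomputable section

/-- The upper half-plane `ℝ²₊`. -/
def upperHalfPlane2 : Set (EuclideanSpace ℝ (Fin 2)) := {z | 0 < z 1}

/-- The open upper half-disk of radius `r` centered at the origin. -/
def upperHalfDisk (r : ℝ) : Set (EuclideanSpace ℝ (Fin 2)) :=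
  {z | ‖z‖ < r ∧ 0 < z 1}

/-- Partial derivative `∂ᵢ u` of a map `u : ℝ² → ℝ²`. -/
def pderiv2 (u : EuclideanSpace ℝ (Fin 2) → EuclideanSpace ℝ (Fin 2)) (i : Fin 2)
    (w : EuclideanSpace ℝ (Fin 2)) : EuclideanSpace ℝ (Fin 2) :=
  fderiv ℝ u w (EuclideanSpace.single i 1)

/-- The stress-energy tensor
`T_ij = ∂_i u · ∂_j u − δ_ij (½|∇u|² + W(u))`. -/
def stressTensor (W : EuclideanSpace ℝ (Fin 2) → ℝ)
    (u : EuclideanSpace ℝ (Fin 2) → EuclideanSpace ℝ (Fin 2)) (i j : Fin 2)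
    (w : EuclideanSpace ℝ (Fin 2)) : ℝ :=
  ⟪pderiv2 u i w, pderiv2 u j w⟫_ℝ -
    (if i = j then (1:ℝ) else 0) *
      ((1 / 2) * ∑ k : Fin 2, ‖pderiv2 u k w‖ ^ 2 + W (u w))

/-!
Since `u` solves `Δu = ∇W(u)`, the stress tensor is divergence free:
`∂ⱼ Tᵢⱼ = ∂ᵢu · (Δu - ∇W(u)) = 0`, the second-order terms cancelling by the symmetry of the
second derivative. Hence `∂ⱼ(zᵢ Tᵢⱼ) = Tᵢᵢ`, and in dimension two the gradient terms of the
trace cancel, leaving `Tᵢᵢ = -2 W(u)`. The identity thus holds pointwise on the half-plane, and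
integrating it over `B_r⁺` gives the claim.
-/

local notation "ℝ²" => EuclideanSpace ℝ (Fin 2)

theorem hasFDerivAt_pderiv2 {u : ℝ² → ℝ²} {z : ℝ²}
    (hu : DifferentiableAt ℝ (fderiv ℝ u) z) (i : Fin 2) :
    HasFDerivAt (pderiv2 u i)
      ((ContinuousLinearMap.apply ℝ ℝ² (EuclideanSpace.single i 1)).comp
        (fderiv ℝ (fderiv ℝ u) z)) z := by
  exact (ContinuousLinearMap.apply ℝ ℝ² _).hasFDerivAt.comp z hu.hasFDerivAt

theorem fderiv_stressTensor_apply {W : ℝ² → ℝ} {g : ℝ²} {u : ℝ² → ℝ²} {z : ℝ²}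
    (hW : HasGradientAt W g (u z)) (hu : ContDiffAt ℝ 2 u z) (i j : Fin 2) (v : ℝ²) :
    fderiv ℝ (stressTensor W u i j) z v =
      ⟪fderiv ℝ (fderiv ℝ u) z v (EuclideanSpace.single i 1), pderiv2 u j z⟫_ℝ +
        ⟪pderiv2 u i z, fderiv ℝ (fderiv ℝ u) z v (EuclideanSpace.single j 1)⟫_ℝ -
      (if i = j then (1:ℝ) else 0) *
        (∑ k : Fin 2, ⟪pderiv2 u k z, fderiv ℝ (fderiv ℝ u) z v (EuclideanSpace.single k 1)⟫_ℝ +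
          ⟪g, fderiv ℝ u z v⟫_ℝ) := by
  have hp := hasFDerivAt_pderiv2 ((hu.fderiv_right le_rfl).differentiableAt one_ne_zero)
  have hWu := hW.hasFDerivAt.comp z (hu.differentiableAt two_ne_zero).hasFDerivAt
  have hT : HasFDerivAt (stressTensor W u i j) _ z := ((hp i).inner ℝ (hp j)).sub
    ((((HasFDerivAt.fun_sum (u := Finset.univ) fun k _ => (hp k).norm_sq).const_mul
      (1 / 2 : ℝ)).add hWu).const_mul (if i = j then (1:ℝ) else 0))
  rw [hT.fderiv]
  by_cases hij : i = j <;>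
    simp only [hij, ↓reduceIte, pderiv2, Fin.sum_univ_two, sub_apply, add_apply, smul_apply,
      ContinuousLinearMap.comp_apply, ContinuousLinearMap.prod_apply,
      ContinuousLinearMap.apply_apply, fderivInnerCLM_apply, coe_innerSL_apply, toDual_apply_apply,
      nsmul_eq_mul, smul_eq_mul, zero_smul, zero_mul, zero_apply] <;>
    ring

theorem sum_fderiv_stressTensor {W : ℝ² → ℝ} {g : ℝ²} {u : ℝ² → ℝ²} {z : ℝ²}
    (hW : HasGradientAt W g (u z)) (hu : ContDiffAt ℝ 2 u z) (i : Fin 2) :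
    ∑ j : Fin 2, fderiv ℝ (stressTensor W u i j) z (EuclideanSpace.single j 1) =
      ⟪pderiv2 u i z,
        ∑ k : Fin 2, fderiv ℝ (pderiv2 u k) z (EuclideanSpace.single k 1) - g⟫_ℝ := by
  have hsymm : IsSymmSndFDerivAt ℝ u z :=
    hu.isSymmSndFDerivAt (by simp [minSmoothness_of_isRCLikeNormedField])
  have hp := hasFDerivAt_pderiv2 ((hu.fderiv_right le_rfl).differentiableAt one_ne_zero)
  simp only [fderiv_stressTensor_apply hW hu, (hp _).fderiv, ContinuousLinearMap.comp_apply,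
    ContinuousLinearMap.apply_apply]
  fin_cases i <;>
    simp only [pderiv2, Fin.sum_univ_two, Fin.isValue, Fin.zero_eta, Fin.mk_one, ite_mul, one_mul,
      zero_mul, Finset.sum_sub_distrib, Finset.sum_ite_eq, Finset.mem_univ, ↓reduceIte,
      hsymm (EuclideanSpace.single 1 1) (EuclideanSpace.single 0 1), inner_sub_right,
      inner_add_right, real_inner_comm] <;>
    ring

theorem differentiableAt_stressTensor {W : ℝ² → ℝ} {u : ℝ² → ℝ²} {z : ℝ²}
    (hW : DifferentiableAt ℝ W (u z)) (hu : ContDiffAt ℝ 2 u z) (i j : Fin 2) :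
    DifferentiableAt ℝ (stressTensor W u i j) z := by
  have hp k := (hasFDerivAt_pderiv2
    ((hu.fderiv_right le_rfl).differentiableAt one_ne_zero) k).differentiableAt
  exact ((hp i).inner ℝ (hp j)).sub ((((DifferentiableAt.fun_sum (u := Finset.univ)
    fun k _ => (hp k).norm_sq ℝ).const_mul _).add
      (hW.comp z (hu.differentiableAt two_ne_zero))).const_mul _)

theorem fderiv_coord_mul_apply {ι : Type*} [Fintype ι] {f : EuclideanSpace ℝ ι → ℝ}
    {z : EuclideanSpace ℝ ι} (hf : DifferentiableAt ℝ f z) (i : ι) (v : EuclideanSpace ℝ ι) :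
    fderiv ℝ (fun w => w i * f w) z v = v i * f z + z i * fderiv ℝ f z v := by
  have h : HasFDerivAt (fun w : EuclideanSpace ℝ ι => w i * f w) _ z :=
    (EuclideanSpace.proj i).hasFDerivAt.mul hf.hasFDerivAt
  rw [h.fderiv]
  simp only [PiLp.proj_apply, add_apply, smul_apply, smul_eq_mul]
  ring

theorem sum_stressTensor_self (W : ℝ² → ℝ) (u : ℝ² → ℝ²) (w : ℝ²) :
    ∑ i : Fin 2, stressTensor W u i i w = -2 * W (u w) := by
  simp only [stressTensor, Fin.sum_univ_two, real_inner_self_eq_norm_sq, if_true]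
  ring

theorem sum_fderiv_coord_mul_stressTensor {W : ℝ² → ℝ} {g : ℝ²} {u : ℝ² → ℝ²} {z : ℝ²}
    (hW : HasGradientAt W g (u z)) (hu : ContDiffAt ℝ 2 u z)
    (hΔ : ∑ k : Fin 2, fderiv ℝ (pderiv2 u k) z (EuclideanSpace.single k 1) = g) :
    ∑ i : Fin 2, ∑ j : Fin 2, fderiv ℝ (fun w => w i * stressTensor W u i j w) z
      (EuclideanSpace.single j 1) = -2 * W (u z) := by
  have hT := differentiableAt_stressTensor hW.differentiableAt hu
  calc
    _ = ∑ i : Fin 2, (stressTensor W u i i z +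
          z i * ∑ j : Fin 2, fderiv ℝ (stressTensor W u i j) z (EuclideanSpace.single j 1)) := by
      simp only [fderiv_coord_mul_apply (hT _ _), Finset.sum_add_distrib, Finset.mul_sum]
      congr 1
      simp [PiLp.single_apply]
    _ = -2 * W (u z) := by
      simp only [sum_fderiv_stressTensor hW hu, hΔ, sub_self, inner_zero_right, mul_zero,
        add_zero, sum_stressTensor_self]

theorem isOpen_upperHalfPlane2 : IsOpen upperHalfPlane2 :=
  isOpen_lt continuous_const (PiLp.continuous_apply 2 _ 1)

theorem measurableSet_upperHalfDisk (r : ℝ) : MeasurableSet (upperHalfDisk r) :=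
  ((isOpen_lt continuous_norm continuous_const).inter isOpen_upperHalfPlane2).measurableSet

theorem stmt_7_general (W : EuclideanSpace ℝ (Fin 2) → ℝ)
    (gradW : EuclideanSpace ℝ (Fin 2) → EuclideanSpace ℝ (Fin 2))
    (hgradW : ∀ p, HasGradientAt W (gradW p) p)
    (u : EuclideanSpace ℝ (Fin 2) → EuclideanSpace ℝ (Fin 2))
    (hu : ContDiffOn ℝ 2 u upperHalfPlane2)
    (heq : ∀ z ∈ upperHalfPlane2,
      (∑ i : Fin 2, fderiv ℝ (pderiv2 u i) z (EuclideanSpace.single i 1)) =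
        gradW (u z))
    (r : ℝ) :
    ∫ z in upperHalfDisk r,
        (∑ i : Fin 2, ∑ j : Fin 2,
          fderiv ℝ (fun w => w i * stressTensor W u i j w) z
            (EuclideanSpace.single j 1)) =
      -2 * ∫ z in upperHalfDisk r, W (u z) := by
  rw [← integral_const_mul]
  refine setIntegral_congr_fun (measurableSet_upperHalfDisk r) fun z hz => ?_
  exact sum_fderiv_coord_mul_stressTensor (hgradW (u z))
    (hu.contDiffAt (isOpen_upperHalfPlane2.mem_nhds hz.2)) (heq z hz.2)

/-- Pohozaev identity: for a `C²` solution `u` of `Δu = ∇W(u)` on the upper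
half-plane and every `r > 0`,
`∫_{B_r⁺} ∂_j(z_i T_ij) dz = −2 ∫_{B_r⁺} W(u) dz` (summation over `i, j`). -/
theorem stmt_7 (W : EuclideanSpace ℝ (Fin 2) → ℝ)
    (gradW : EuclideanSpace ℝ (Fin 2) → EuclideanSpace ℝ (Fin 2))
    (hW : ContDiff ℝ 1 W) (hgradW : ∀ p, HasGradientAt W (gradW p) p)
    (u : EuclideanSpace ℝ (Fin 2) → EuclideanSpace ℝ (Fin 2))
    (hu : ContDiffOn ℝ 2 u upperHalfPlane2)
    (heq : ∀ z ∈ upperHalfPlane2,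
      (∑ i : Fin 2, fderiv ℝ (pderiv2 u i) z (EuclideanSpace.single i 1)) =
        gradW (u z))
    (r : ℝ) (hr : 0 < r) :
    ∫ z in upperHalfDisk r,
        (∑ i : Fin 2, ∑ j : Fin 2,
          fderiv ℝ (fun w => w i * stressTensor W u i j w) z
            (EuclideanSpace.single j 1)) =
      -2 * ∫ z in upperHalfDisk r, W (u z) :=
  stmt_7_general W gradW hgradW u hu heq r

end
end
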